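/- Let σ, σ₀ > 0 and T > 0. The functions M(t) = (σ² + σ₀²t)(T − t) / (σ²(σ² + σ₀²(2T − t))) and U(t) = log((σ² + σ₀²T)/√((σ² + σ₀²t)(σ² + σ₀²(2T − t)))) on [0,T] satisfy M(T) = U(T) = 0 and the ODE system: M'(t) = −2σ²σ₀⁴/(σ² + σ₀²t)² · M(t)² + 4σ₀²/(σ² + σ₀²t) · M(t) − σ⁻², and U'(t) = −σ²σ₀⁴/(σ² + σ₀²t)² · M(t). -/

import Mathlib

/-- One-dimensional Bayesian risk premium coefficient `M`. -/
noncomputable def stmt13M (σ σ₀ T t : ℝ) : ℝ :=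
  (σ ^ 2 + σ₀ ^ 2 * t) * (T - t) / (σ ^ 2 * (σ ^ 2 + σ₀ ^ 2 * (2 * T - t)))

/-- One-dimensional Bayesian risk premium coefficient `U`. -/
noncomputable def stmt13U (σ σ₀ T t : ℝ) : ℝ :=
  Real.log ((σ ^ 2 + σ₀ ^ 2 * T) /
    Real.sqrt ((σ ^ 2 + σ₀ ^ 2 * t) * (σ ^ 2 + σ₀ ^ 2 * (2 * T - t))))

/-!
Write `A t = σ² + σ₀² t` and `B t = σ² + σ₀² (2T - t)`, which are affine with
`A + B = 2 A(T)`, so that `M = A (T - t) / (σ² B)` and `U = log (A(T) / √(A B))`.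
Differentiating, both equations become identities between rational functions of `t` whose
denominators are powers of `σ`, `A` and `B`, all nonzero on `[0, T]` since `A, B ≥ σ² > 0`.
At `t = T` the argument of the logarithm is `A(T) / |A(T)| ∈ {-1, 0, 1}`, whose logarithm is `0`.
-/

open Real

theorem Real.log_div_abs_self (x : ℝ) : log (x / |x|) = 0 := by
  rcases eq_or_ne x 0 with rfl | hx
  · simp
  · rw [log_div hx (abs_ne_zero.2 hx), log_abs, sub_self]

theorem HasDerivAt.log_const_div_sqrt {f : ℝ → ℝ} {f' x : ℝ} (K : ℝ) (hf : HasDerivAt f f' x)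
    (hx : 0 < f x) (hK : K ≠ 0) :
    HasDerivAt (fun y => Real.log (K / √(f y))) (-(f' / (2 * f x))) x := by
  have hsqrt : √(f x) ≠ 0 := (sqrt_pos.2 hx).ne'
  convert ((hasDerivAt_const x K).fun_div (hf.sqrt hx.ne') hsqrt).log (div_ne_zero hK hsqrt) using 1
  rw [sq_sqrt hx.le]
  field_simp
  ring

theorem stmt13M_self (σ σ₀ T : ℝ) : stmt13M σ σ₀ T T = 0 := by
  simp [stmt13M]

theorem stmt13U_self (σ σ₀ T : ℝ) : stmt13U σ σ₀ T T = 0 := by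
  rw [stmt13U, show 2 * T - T = T by ring, sqrt_mul_self_eq_abs, log_div_abs_self]

theorem hasDerivAt_sq_add_sq_mul (σ σ₀ t : ℝ) :
    HasDerivAt (fun s => σ ^ 2 + σ₀ ^ 2 * s) (σ₀ ^ 2) t := by
  simpa using ((hasDerivAt_id t).const_mul (σ₀ ^ 2)).const_add (σ ^ 2)

theorem hasDerivAt_sq_add_sq_mul_sub (σ σ₀ T t : ℝ) :
    HasDerivAt (fun s => σ ^ 2 + σ₀ ^ 2 * (2 * T - s)) (-σ₀ ^ 2) t := by
  simpa using (((hasDerivAt_id t).const_sub (2 * T)).const_mul (σ₀ ^ 2)).const_add (σ ^ 2)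

section Riccati

variable {σ σ₀ T t : ℝ}

theorem hasDerivAt_stmt13M (hσ : σ ≠ 0) (hA : σ ^ 2 + σ₀ ^ 2 * t ≠ 0)
    (hB : σ ^ 2 + σ₀ ^ 2 * (2 * T - t) ≠ 0) :
    HasDerivAt (stmt13M σ σ₀ T)
      (-(2 * σ ^ 2 * σ₀ ^ 4) / (σ ^ 2 + σ₀ ^ 2 * t) ^ 2 * (stmt13M σ σ₀ T t) ^ 2
        + 4 * σ₀ ^ 2 / (σ ^ 2 + σ₀ ^ 2 * t) * stmt13M σ σ₀ T t - σ⁻¹ ^ 2) t := by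
  have hT : HasDerivAt (fun s => T - s) (-1) t := by
    simpa using (hasDerivAt_id t).const_sub T
  refine ((hasDerivAt_sq_add_sq_mul σ σ₀ t).fun_mul hT).fun_div
    ((hasDerivAt_sq_add_sq_mul_sub σ σ₀ T t).const_mul (σ ^ 2))
    (mul_ne_zero (pow_ne_zero 2 hσ) hB) |>.congr_deriv ?_
  rw [stmt13M]
  -- otherwise `field_simp` normalises `2 * T` to `T * 2` and no longer recognises `hB`
  generalize hBdef : σ ^ 2 + σ₀ ^ 2 * (2 * T - t) = B at hB ⊢
  field_simp
  subst hBdef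
  ring

theorem hasDerivAt_stmt13U (hσ : σ ≠ 0) (hA : 0 < σ ^ 2 + σ₀ ^ 2 * t)
    (hB : 0 < σ ^ 2 + σ₀ ^ 2 * (2 * T - t)) :
    HasDerivAt (stmt13U σ σ₀ T)
      (-(σ ^ 2 * σ₀ ^ 4) / (σ ^ 2 + σ₀ ^ 2 * t) ^ 2 * stmt13M σ σ₀ T t) t := by
  have hAT : 0 < σ ^ 2 + σ₀ ^ 2 * T := by linarith
  refine ((hasDerivAt_sq_add_sq_mul σ σ₀ t).fun_mul (hasDerivAt_sq_add_sq_mul_sub σ σ₀ T t))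
    |>.log_const_div_sqrt _ (mul_pos hA hB) hAT.ne' |>.congr_deriv ?_
  rw [stmt13M]
  field_simp
  ring

end Riccati

theorem stmt13_general (σ σ₀ T : ℝ) (hσ : 0 < σ) :
    stmt13M σ σ₀ T T = 0 ∧ stmt13U σ σ₀ T T = 0 ∧
    ∀ t ∈ Set.Icc (0:ℝ) T,
      HasDerivAt (stmt13M σ σ₀ T)
        (-(2 * σ ^ 2 * σ₀ ^ 4) / (σ ^ 2 + σ₀ ^ 2 * t) ^ 2 * (stmt13M σ σ₀ T t) ^ 2
          + 4 * σ₀ ^ 2 / (σ ^ 2 + σ₀ ^ 2 * t) * stmt13M σ σ₀ T t - σ⁻¹ ^ 2) t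
      ∧ HasDerivAt (stmt13U σ σ₀ T)
          (-(σ ^ 2 * σ₀ ^ 4) / (σ ^ 2 + σ₀ ^ 2 * t) ^ 2 * stmt13M σ σ₀ T t) t := by
  refine ⟨stmt13M_self σ σ₀ T, stmt13U_self σ σ₀ T, fun t ⟨ht0, htT⟩ => ?_⟩
  have hA : 0 < σ ^ 2 + σ₀ ^ 2 * t := by positivity
  have hB : 0 < σ ^ 2 + σ₀ ^ 2 * (2 * T - t) := by
    have : 0 ≤ 2 * T - t := by linarith
    positivity
  exact ⟨hasDerivAt_stmt13M hσ.ne' hA.ne' hB.ne', hasDerivAt_stmt13U hσ.ne' hA hB⟩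

/-- The one-dimensional Riccati system for the Gaussian Bayesian risk premium:
`M(T) = U(T) = 0`, `M' = −2σ²σ₀⁴/(σ²+σ₀²t)²·M² + 4σ₀²/(σ²+σ₀²t)·M − σ⁻²` and
`U' = −σ²σ₀⁴/(σ²+σ₀²t)²·M`. -/
theorem stmt13 (σ σ₀ T : ℝ) (hσ : 0 < σ) (hσ₀ : 0 < σ₀) (hT : 0 < T) :
    stmt13M σ σ₀ T T = 0 ∧ stmt13U σ σ₀ T T = 0 ∧
    ∀ t ∈ Set.Icc (0:ℝ) T,
      HasDerivAt (stmt13M σ σ₀ T)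
        (-(2 * σ ^ 2 * σ₀ ^ 4) / (σ ^ 2 + σ₀ ^ 2 * t) ^ 2 * (stmt13M σ σ₀ T t) ^ 2
          + 4 * σ₀ ^ 2 / (σ ^ 2 + σ₀ ^ 2 * t) * stmt13M σ σ₀ T t - σ⁻¹ ^ 2) t
      ∧ HasDerivAt (stmt13U σ σ₀ T)
          (-(σ ^ 2 * σ₀ ^ 4) / (σ ^ 2 + σ₀ ^ 2 * t) ^ 2 * stmt13M σ σ₀ T t) t :=
  stmt13_general σ σ₀ T hσ
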